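/- arXiv:1603.09235 — 5 statements merged into one kernel-verified Lean document; each statement's English description precedes it below -/
import Mathlib

section
/- ((η,β)-Primitive Decomposition, linear-algebra form of Corollary 3.8.) Under the stated bigraded hard Lefschetz hypotheses, for all integers i, j ≥ 0 and all 0 ≤ a ≤ i, 0 ≤ b ≤ j the map η^a ∘ β^b restricts to an injection on the primitive subspace P_{-i}^{-j}, and V is the internal direct sum of the subspaces η^a(β^b(P_{-i}^{-j})) taken over all i, j ≥ 0, 0 ≤ a ≤ i and 0 ≤ b ≤ j. -/
/-!
The decomposition comes from applying one abstract hard Lefschetz statement twice: if `f` maps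
`W x` to `W (σ x)`, `σ` raises a degree `d` by `2`, and `f ^ n : W x → W (σ^[n] x)` is bijective
whenever `d x = -n`, then the module is the direct sum of the pieces
`f ^ a (W x ∩ ker f ^ (-d x + 1))`, `a ≤ -d x`. For spanning, `W y = P y + f (W (σ⁻¹ y))` when
`d y ≤ 0`, a descent in degree that stops because only finitely many `W x` are nonzero, and
positive degrees are images of negative ones. The first application is to `η` on the bigrading
with degree `i`, the second to `β` on the resulting `η`-pieces with degree `j - i`: since `η` and
`β` commute and `η ^ a` is injective on `V_{-i}`, `β` is again a Lefschetz operator there, and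
the `β`-primitive part of `η ^ a` applied to an `η`-primitive part is `η ^ a (P_{-i}^{-j})`.
-/

section General

variable {R V ι : Type*} [Ring R] [AddCommGroup V] [Module R V]

theorem iSupIndep.of_fiberwise {κ : Type*} {W : ι → Submodule R V} (hW : iSupIndep W)
    {Q : κ → Submodule R V} (c : κ → ι) (hQ : ∀ k, Q k ≤ W (c k))
    (hfib : ∀ (i : ι) (s : Finset κ) (v : κ → V), (∀ k ∈ s, v k ∈ Q k) → (∀ k ∈ s, c k = i) →
      ∑ k ∈ s, v k = 0 → ∀ k ∈ s, v k = 0) :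
    iSupIndep Q := by
  classical
  rw [iSupIndep_iff_finsetSum_eq_zero_imp_eq_zero] at hW ⊢
  intro s v hv hs k hk
  have hc : ∀ l ∈ s, c l ∈ s.image c := fun l hl => Finset.mem_image_of_mem c hl
  have hfibsum : ∀ i ∈ s.image c, ∑ l ∈ s with c l = i, v l = 0 := by
    refine hW _ (fun i => ∑ l ∈ s with c l = i, v l) (fun i _ => Submodule.sum_mem _ ?_) ?_
    · intro l hl
      obtain ⟨hls, hli⟩ := Finset.mem_filter.mp hl
      exact hli ▸ hQ l (hv l hls)
    · rwa [Finset.sum_fiberwise_of_maps_to hc]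
  exact hfib (c k) _ v (fun l hl => hv l (Finset.mem_filter.mp hl).1)
    (fun l hl => (Finset.mem_filter.mp hl).2) (hfibsum _ (hc k hk)) k
    (Finset.mem_filter.mpr ⟨hk, rfl⟩)

theorem exists_forall_lt_eq_bot_of_iSupIndep [IsNoetherian R V] {W : ι → Submodule R V}
    (hW : iSupIndep W) (d : ι → ℤ) : ∃ M, ∀ x, d x < M → W x = ⊥ := by
  obtain ⟨M, hM⟩ := ((WellFoundedGT.finite_ne_bot_of_iSupIndep hW).image d).bddBelow
  exact ⟨M, fun x hx => by_contra fun hne => (hM ⟨x, hne, rfl⟩).not_gt hx⟩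

theorem Submodule.map_pow_le_of_map_le {W : ι → Submodule R V} {f : Module.End R V}
    {σ : ι → ι} (hf : ∀ x, (W x).map f ≤ W (σ x)) (n : ℕ) (x : ι) :
    (W x).map (f ^ n) ≤ W (σ^[n] x) := by
  induction n generalizing x with
  | zero => simp [Module.End.one_eq_id]
  | succ n ih =>
    rw [pow_succ, Module.End.mul_eq_comp, Submodule.map_comp, Function.iterate_succ_apply]
    exact (Submodule.map_mono (hf x)).trans (ih (σ x))

theorem eq_zero_of_pow_apply_eq_zero_of_le {f : Module.End R V} {Q : Submodule R V} {N a : ℕ}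
    (hQ : ∀ v ∈ Q, (f ^ N) v = 0 → v = 0) (ha : a ≤ N) {v : V} (hv : v ∈ Q)
    (hfv : (f ^ a) v = 0) : v = 0 :=
  hQ v hv (by rw [← Nat.sub_add_cancel ha, pow_add, Module.End.mul_apply, hfv, map_zero])

theorem Submodule.map_inf_ker_le_of_commute {g h : Module.End R V} (hgh : Commute g h)
    (Q : Submodule R V) : (Q ⊓ LinearMap.ker h).map g ≤ Q.map g ⊓ LinearMap.ker h := by
  rintro _ ⟨u, ⟨huQ, hu⟩, rfl⟩
  refine ⟨⟨u, huQ, rfl⟩, LinearMap.mem_ker.mpr ?_⟩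
  rw [← Module.End.mul_apply, ← hgh.eq, Module.End.mul_apply, LinearMap.mem_ker.mp hu, map_zero]

theorem Submodule.map_inf_ker_of_commute {g h : Module.End R V} (hgh : Commute g h)
    (Q : Submodule R V) (hinj : ∀ u ∈ Q, g (h u) = 0 → h u = 0) :
    (Q ⊓ LinearMap.ker h).map g = Q.map g ⊓ LinearMap.ker h := by
  refine le_antisymm (Submodule.map_inf_ker_le_of_commute hgh Q) ?_
  rintro _ ⟨⟨u, huQ, rfl⟩, hu⟩
  refine ⟨u, ⟨huQ, hinj u huQ ?_⟩, rfl⟩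
  rw [← Module.End.mul_apply, hgh.eq, Module.End.mul_apply]
  exact hu

theorem Submodule.map_map_of_commute {g h : Module.End R V} (hgh : Commute g h)
    (Q : Submodule R V) : (Q.map g).map h = (Q.map h).map g := by
  rw [← Submodule.map_comp, ← Submodule.map_comp, ← Module.End.mul_eq_comp,
    ← Module.End.mul_eq_comp, hgh.eq]

theorem DirectSum.IsInternal.comp_equiv {κ : Type*} [DecidableEq ι] [DecidableEq κ]
    {A : ι → Submodule R V} (hA : DirectSum.IsInternal A) (e : κ ≃ ι) :
    DirectSum.IsInternal (A ∘ e) := by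
  rw [DirectSum.isInternal_submodule_iff_iSupIndep_and_iSup_eq_top] at hA ⊢
  exact ⟨hA.1.comp e.injective, by rw [← hA.2]; exact e.iSup_comp (g := A)⟩

theorem pow_apply_mem_of_map_le {W : ℤ × ℤ → Submodule R V} {f : Module.End R V} {c₁ c₂ : ℤ}
    (hf : ∀ i j : ℤ, (W (i, j)).map f ≤ W (i + c₁, j + c₂)) (n : ℕ) {i j : ℤ} {v : V}
    (hv : v ∈ W (i, j)) : (f ^ n) v ∈ W (i + n * c₁, j + n * c₂) := by
  induction n generalizing i j v with
  | zero => simpa using hv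
  | succ n ih =>
    rw [pow_succ, Module.End.mul_apply]
    convert ih (hf i j ⟨v, hv, rfl⟩) using 3 <;> push_cast <;> ring

structure IsLefschetzOperator (W : ι → Submodule R V) (d : ι → ℤ) (σ : ι ≃ ι)
    (f : Module.End R V) : Prop where
  degree_shift : ∀ x, d (σ x) = d x + 2
  map_le : ∀ x, (W x).map f ≤ W (σ x)
  map_pow_eq : ∀ x (n : ℕ), d x = -n → (W x).map (f ^ n) = W (σ^[n] x)
  pow_injOn : ∀ x (n : ℕ), d x = -n → ∀ v ∈ W x, (f ^ n) v = 0 → v = 0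

/-- Only used at indices with `d x ≤ 0`, where `(-d x).toNat = -d x`. -/
def primitivePart (W : ι → Submodule R V) (d : ι → ℤ) (f : Module.End R V) (x : ι) :
    Submodule R V :=
  W x ⊓ LinearMap.ker (f ^ ((-d x).toNat + 1))

abbrev LefschetzIndex (d : ι → ℤ) : Type _ := {p : ι × ℕ // (p.2 : ℤ) ≤ -d p.1}

def lefschetzPiece (W : ι → Submodule R V) (d : ι → ℤ) (f : Module.End R V)
    (p : LefschetzIndex d) : Submodule R V :=
  (primitivePart W d f p.1.1).map (f ^ p.1.2)

namespace IsLefschetzOperator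

variable {W : ι → Submodule R V} {d : ι → ℤ} {σ : ι ≃ ι} {f : Module.End R V}

theorem degree_iterate (h : IsLefschetzOperator W d σ f) (n : ℕ) (x : ι) :
    d (σ^[n] x) = d x + 2 * n := by
  induction n generalizing x with
  | zero => simp
  | succ n ih =>
    rw [Function.iterate_succ_apply, ih, h.degree_shift]
    push_cast
    ring

theorem lefschetzPiece_le (h : IsLefschetzOperator W d σ f) (p : LefschetzIndex d) :
    lefschetzPiece W d f p ≤ W (σ^[p.1.2] p.1.1) :=
  (Submodule.map_mono inf_le_left).trans (Submodule.map_pow_le_of_map_le h.map_le _ _)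

theorem pow_apply_eq_zero_of_mem_lefschetzPiece {p : LefschetzIndex d} {v : V}
    (hv : v ∈ lefschetzPiece W d f p) {n : ℕ} (hn : -d p.1.1 < p.1.2 + n) :
    (f ^ n) v = 0 := by
  obtain ⟨u, hu, rfl⟩ := hv
  have hexp : n + p.1.2 = (n + p.1.2 - ((-d p.1.1).toNat + 1)) + ((-d p.1.1).toNat + 1) := by
    omega
  rw [← Module.End.mul_apply, ← pow_add, hexp, pow_add, Module.End.mul_apply,
    LinearMap.mem_ker.mp hu.2, map_zero]

theorem eq_zero_of_mem_lefschetzPiece (h : IsLefschetzOperator W d σ f)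
    {p : LefschetzIndex d} {v : V} (hv : v ∈ lefschetzPiece W d f p)
    (hfv : (f ^ ((-d p.1.1).toNat - p.1.2)) v = 0) : v = 0 := by
  obtain ⟨u, hu, rfl⟩ := hv
  have hp := p.2
  have hu0 : u = 0 := by
    refine h.pow_injOn p.1.1 (-d p.1.1).toNat (by omega) u hu.1 ?_
    rwa [← Nat.sub_add_cancel (show p.1.2 ≤ (-d p.1.1).toNat by omega), pow_add,
      Module.End.mul_apply]
  rw [hu0, map_zero]

/-- The pieces landing in a fixed `W y` are independent: the piece of highest level survives
`f ^ (level - d y)`, which kills all the others. -/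
theorem eq_zero_of_sum_eq_zero_of_iterate_eq (h : IsLefschetzOperator W d σ f) (y : ι)
    (s : Finset (LefschetzIndex d)) (v : LefschetzIndex d → V)
    (hv : ∀ p ∈ s, v p ∈ lefschetzPiece W d f p) (hy : ∀ p ∈ s, σ^[p.1.2] p.1.1 = y)
    (hs : ∑ p ∈ s, v p = 0) : ∀ p ∈ s, v p = 0 := by
  classical
  induction s using Finset.induction_on_max_value (fun p : LefschetzIndex d => p.1.2) with
  | empty => simp
  | insert q s hq hmax ih =>
    have hdeg : ∀ p ∈ insert q s, d p.1.1 = d y - 2 * p.1.2 := fun p hp => by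
      rw [← hy p hp, h.degree_iterate]; ring
    have hlt : ∀ p ∈ s, p.1.2 < q.1.2 := by
      intro p hp
      refine (hmax p hp).lt_of_ne fun hpq => hq ?_
      have hx : p.1.1 = q.1.1 := σ.injective.iterate p.1.2 <| by
        rw [hy p (Finset.mem_insert_of_mem hp), hpq, hy q (Finset.mem_insert_self q s)]
      exact (Subtype.ext (Prod.ext hx hpq) : p = q) ▸ hp
    have hq0 : v q = 0 := by
      refine h.eq_zero_of_mem_lefschetzPiece (hv q (Finset.mem_insert_self q s)) ?_
      have hkill : ∀ p ∈ s, (f ^ ((-d q.1.1).toNat - q.1.2)) (v p) = 0 := fun p hp =>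
        pow_apply_eq_zero_of_mem_lefschetzPiece (hv p (Finset.mem_insert_of_mem hp)) (by
          have := hdeg p (Finset.mem_insert_of_mem hp)
          have := hdeg q (Finset.mem_insert_self q s)
          have := hlt p hp
          have := q.2
          omega)
      have := congrArg (f ^ ((-d q.1.1).toNat - q.1.2)) hs
      rwa [Finset.sum_insert hq, map_add, map_sum, Finset.sum_eq_zero hkill, add_zero,
        map_zero] at this
    rw [Finset.sum_insert hq, hq0, zero_add] at hs
    intro p hp
    rcases Finset.mem_insert.mp hp with rfl | hp
    · exact hq0
    · exact ih (fun p hp => hv p (Finset.mem_insert_of_mem hp))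
        (fun p hp => hy p (Finset.mem_insert_of_mem hp)) hs p hp

theorem iSupIndep_lefschetzPiece (h : IsLefschetzOperator W d σ f) (hW : iSupIndep W) :
    iSupIndep (lefschetzPiece W d f) :=
  hW.of_fiberwise (fun p => σ^[p.1.2] p.1.1) h.lefschetzPiece_le
    fun y _ _ hv hy hs => h.eq_zero_of_sum_eq_zero_of_iterate_eq y _ _ hv hy hs

theorem le_primitivePart_sup_map (h : IsLefschetzOperator W d σ f) {y : ι} (hy : d y ≤ 0) :
    W y ≤ primitivePart W d f y ⊔ (W (σ.symm y)).map f := by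
  intro v hv
  set n := (-d y).toNat
  have hx : d (σ.symm y) = -((n + 2 : ℕ) : ℤ) := by
    have := h.degree_shift (σ.symm y)
    rw [σ.apply_symm_apply] at this
    omega
  -- `f ^ (n + 1) v` lies in `W (σ^[n + 1] y)`, the image of `W (σ⁻¹ y)` under `f ^ (n + 2)`.
  have hfv : (f ^ (n + 1)) v ∈ (W (σ.symm y)).map (f ^ (n + 2)) := by
    rw [h.map_pow_eq _ _ hx, Function.iterate_succ_apply, σ.apply_symm_apply]
    exact Submodule.map_pow_le_of_map_le h.map_le (n + 1) y ⟨v, hv, rfl⟩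
  obtain ⟨w, hw, hfw⟩ := hfv
  have hw' : f w ∈ W y := by simpa using h.map_le (σ.symm y) ⟨w, hw, rfl⟩
  rw [← sub_add_cancel v (f w)]
  refine Submodule.add_mem_sup ⟨sub_mem hv hw', LinearMap.mem_ker.mpr ?_⟩ ⟨w, hw, rfl⟩
  rw [map_sub, ← Module.End.mul_apply, ← pow_succ, hfw, sub_self]

theorem map_lefschetzPiece_le (p : LefschetzIndex d) :
    (lefschetzPiece W d f p).map f ≤ ⨆ q, lefschetzPiece W d f q := by
  rintro _ ⟨w, hw, rfl⟩
  by_cases hp : ((p.1.2 + 1 : ℕ) : ℤ) ≤ -d p.1.1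
  · obtain ⟨u, hu, rfl⟩ := hw
    refine Submodule.mem_iSup_of_mem ⟨(p.1.1, p.1.2 + 1), hp⟩ ⟨u, hu, ?_⟩
    rw [pow_succ', Module.End.mul_apply]
  · rw [← pow_one f, pow_apply_eq_zero_of_mem_lefschetzPiece hw (by omega)]
    exact zero_mem _

theorem map_iSup_lefschetzPiece_le :
    (⨆ q, lefschetzPiece W d f q).map f ≤ ⨆ q, lefschetzPiece W d f q := by
  rw [Submodule.map_iSup]
  exact iSup_le map_lefschetzPiece_le

theorem map_pow_iSup_lefschetzPiece_le (n : ℕ) :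
    (⨆ q, lefschetzPiece W d f q).map (f ^ n) ≤ ⨆ q, lefschetzPiece W d f q := by
  induction n with
  | zero => simp [Module.End.one_eq_id]
  | succ n ih =>
    rw [pow_succ', Module.End.mul_eq_comp, Submodule.map_comp]
    exact (Submodule.map_mono ih).trans map_iSup_lefschetzPiece_le

theorem le_iSup_lefschetzPiece_of_nonpos (h : IsLefschetzOperator W d σ f) {M : ℤ}
    (hM : ∀ x, d x < M → W x = ⊥) (y : ι) (hy : d y ≤ 0) :
    W y ≤ ⨆ q, lefschetzPiece W d f q := by
  suffices ∀ k : ℕ, ∀ y, d y ≤ 0 → d y < M + 2 * k → W y ≤ ⨆ q, lefschetzPiece W d f q from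
    this ((d y - M).toNat + 1) y hy (by omega)
  intro k
  induction k with
  | zero => intro y _ hyM; simp [hM y (by omega)]
  | succ k ih =>
    intro y hy hyM
    have hd := h.degree_shift (σ.symm y)
    rw [σ.apply_symm_apply] at hd
    refine (h.le_primitivePart_sup_map hy).trans (sup_le ?_ ?_)
    · refine le_trans ?_ (le_iSup _ ⟨(y, 0), by simpa using hy⟩)
      simp [lefschetzPiece, Module.End.one_eq_id]
    · exact (Submodule.map_mono (ih _ (by omega) (by omega))).trans map_iSup_lefschetzPiece_le

theorem iSup_lefschetzPiece_eq_top [IsNoetherian R V] [DecidableEq ι]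
    (h : IsLefschetzOperator W d σ f) (hW : DirectSum.IsInternal W) : ⨆ q, lefschetzPiece W d f q = ⊤ := by
  obtain ⟨M, hM⟩ := exists_forall_lt_eq_bot_of_iSupIndep hW.submodule_iSupIndep d
  rw [eq_top_iff, ← hW.submodule_iSup_eq_top, iSup_le_iff]
  intro y
  rcases le_or_gt (d y) 0 with hy | hy
  · exact h.le_iSup_lefschetzPiece_of_nonpos hM y hy
  · set m := (d y).toNat
    have hy' : σ^[m] (σ.symm^[m] y) = y := σ.right_inv.iterate m y
    have hx : d (σ.symm^[m] y) = -m := by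
      have := h.degree_iterate m (σ.symm^[m] y)
      rw [hy'] at this
      omega
    rw [← hy', ← h.map_pow_eq _ m hx]
    exact (Submodule.map_mono (h.le_iSup_lefschetzPiece_of_nonpos hM _ (by omega))).trans
      (map_pow_iSup_lefschetzPiece_le m)

theorem isInternal_lefschetzPiece [IsNoetherian R V] [DecidableEq ι]
    (h : IsLefschetzOperator W d σ f) (hW : DirectSum.IsInternal W) :
    DirectSum.IsInternal (lefschetzPiece W d f) :=
  DirectSum.isInternal_submodule_of_iSupIndep_of_iSup_eq_top
    (h.iSupIndep_lefschetzPiece hW.submodule_iSupIndep) (h.iSup_lefschetzPiece_eq_top hW)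

end IsLefschetzOperator

section PerverseGrading

variable {Vg : ℤ × ℤ → Submodule R V} {η β : Module.End R V}

theorem isLefschetzOperator_eta (hη : ∀ i j : ℤ, (Vg (i, j)).map η ≤ Vg (i + 2, j + 2))
    (hRHL : ∀ (i : ℕ) (j : ℤ),
      (Vg (-(i : ℤ), j)).map (η ^ i) = Vg ((i : ℤ), j + 2 * i) ∧
      ∀ v ∈ Vg (-(i : ℤ), j), (η ^ i) v = 0 → v = 0) :
    IsLefschetzOperator Vg Prod.fst (Equiv.addRight (2, 2)) η where
  degree_shift _ := rfl
  map_le x := hη x.1 x.2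
  map_pow_eq := by
    rintro ⟨_, j⟩ n rfl
    rw [(hRHL n j).1, Equiv.coe_addRight, add_right_iterate_apply]
    congr 1
    ext <;> simp <;> ring
  pow_injOn := by
    rintro ⟨_, j⟩ n rfl
    exact (hRHL n j).2

def shiftSnd : LefschetzIndex (Prod.fst : ℤ × ℤ → ℤ) ≃ LefschetzIndex (Prod.fst : ℤ × ℤ → ℤ) :=
  ((Equiv.addRight ((0, 2) : ℤ × ℤ)).prodCongr (Equiv.refl ℕ)).subtypeEquiv fun p => by simp

theorem shiftSnd_iterate_val (n : ℕ) (p : LefschetzIndex (Prod.fst : ℤ × ℤ → ℤ)) :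
    (shiftSnd^[n] p).1 = ((p.1.1.1, p.1.1.2 + 2 * n), p.1.2) := by
  have hsemi : Function.Semiconj Subtype.val shiftSnd (Prod.map (· + ((0, 2) : ℤ × ℤ)) id) :=
    fun _ => rfl
  rw [hsemi.iterate_right n p, Prod.map_iterate, Prod.map_apply, add_right_iterate_apply,
    Function.iterate_id]
  ext <;> simp [mul_comm]

theorem shiftSnd_val (p : LefschetzIndex (Prod.fst : ℤ × ℤ → ℤ)) :
    (shiftSnd p).1 = ((p.1.1.1, p.1.1.2 + 2), p.1.2) := by
  simpa using shiftSnd_iterate_val 1 p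

def perverseDegree (p : LefschetzIndex (Prod.fst : ℤ × ℤ → ℤ)) : ℤ := p.1.1.2 - p.1.1.1

theorem map_pow_inf_ker_eq (hcomm : Commute η β)
    (hη : ∀ i j : ℤ, (Vg (i, j)).map η ≤ Vg (i + 2, j + 2))
    (hHLP : ∀ (i : ℤ) (j : ℕ),
      (Vg (i, i - j)).map (β ^ j) = Vg (i, i + j) ∧
      ∀ v ∈ Vg (i, i - j), (β ^ j) v = 0 → v = 0) (i : ℤ) (n N : ℕ) :
    (Vg (i, i - n) ⊓ LinearMap.ker (η ^ N)).map (β ^ n) =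
      Vg (i, i + n) ⊓ LinearMap.ker (η ^ N) := by
  rw [Submodule.map_inf_ker_of_commute (hcomm.pow_pow N n).symm, (hHLP i n).1]
  intro u hu hηu
  refine (hHLP (i + N * 2) n).2 _ ?_ hηu
  convert pow_apply_mem_of_map_le hη N hu using 3
  ring

theorem beta_pow_apply_eq_zero_of_eta_pow (hβ : ∀ i j : ℤ, (Vg (i, j)).map β ≤ Vg (i, j + 2))
    (hRHL : ∀ (i : ℕ) (j : ℤ), ∀ v ∈ Vg (-(i : ℤ), j), (η ^ i) v = 0 → v = 0)
    {N a b : ℕ} (ha : a ≤ N) {j : ℤ} {u : V} (hu : u ∈ Vg (-(N : ℤ), j))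
    (hu0 : (η ^ a) ((β ^ b) u) = 0) : (β ^ b) u = 0 :=
  eq_zero_of_pow_apply_eq_zero_of_le (hRHL N _) ha
    (by simpa using pow_apply_mem_of_map_le (c₁ := 0) (fun i j => by simpa using hβ i j) b hu) hu0

theorem isLefschetzOperator_beta (hcomm : Commute η β)
    (hη : ∀ i j : ℤ, (Vg (i, j)).map η ≤ Vg (i + 2, j + 2))
    (hβ : ∀ i j : ℤ, (Vg (i, j)).map β ≤ Vg (i, j + 2))
    (hRHL : ∀ (i : ℕ) (j : ℤ), ∀ v ∈ Vg (-(i : ℤ), j), (η ^ i) v = 0 → v = 0)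
    (hHLP : ∀ (i : ℤ) (j : ℕ),
      (Vg (i, i - j)).map (β ^ j) = Vg (i, i + j) ∧
      ∀ v ∈ Vg (i, i - j), (β ^ j) v = 0 → v = 0) :
    IsLefschetzOperator (lefschetzPiece Vg Prod.fst η) perverseDegree shiftSnd β where
  degree_shift p := by
    simp only [perverseDegree, shiftSnd_val]
    ring
  map_le := by
    rintro ⟨⟨⟨i, j⟩, a⟩, ha⟩
    simp only [lefschetzPiece, primitivePart, shiftSnd_val]
    rw [Submodule.map_map_of_commute (hcomm.pow_left a)]
    exact Submodule.map_mono ((Submodule.map_inf_ker_le_of_commute (hcomm.pow_left _).symm _).trans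
      (inf_le_inf_right _ (hβ i j)))
  map_pow_eq := by
    rintro ⟨⟨⟨i, j⟩, a⟩, ha⟩ n hn
    obtain rfl : j = i - n := by simp only [perverseDegree] at hn; omega
    simp only [lefschetzPiece, primitivePart, shiftSnd_iterate_val]
    rw [Submodule.map_map_of_commute (hcomm.pow_pow a n), map_pow_inf_ker_eq hcomm hη hHLP]
    ring_nf
  pow_injOn := by
    rintro ⟨⟨⟨i, j⟩, a⟩, ha⟩ n hn _ ⟨u, ⟨hu, -⟩, rfl⟩ hβu
    obtain rfl : j = i - n := by simp only [perverseDegree] at hn; omega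
    obtain ⟨N, rfl⟩ : ∃ N : ℕ, i = -N := ⟨(-i).toNat, by simp at ha; omega⟩
    have hβu' : (β ^ n) u = 0 := by
      refine beta_pow_apply_eq_zero_of_eta_pow hβ hRHL (show a ≤ N by simpa using ha) hu ?_
      rwa [← Module.End.mul_apply, (hcomm.pow_pow a n).eq, Module.End.mul_apply]
    rw [(hHLP _ n).2 u hu hβu', map_zero]

def primitiveIndexEquiv :
    {x : (ℕ × ℕ) × ℕ × ℕ // x.2.1 ≤ x.1.1 ∧ x.2.2 ≤ x.1.2} ≃ LefschetzIndex perverseDegree where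
  toFun t := ⟨(⟨((-(t.1.1.1 : ℤ), -(t.1.1.1 : ℤ) - t.1.1.2), t.1.2.1), by simpa using t.2.1⟩,
    t.1.2.2), by simpa [perverseDegree] using t.2.2⟩
  invFun q := ⟨(((-q.1.1.1.1.1).toNat, (q.1.1.1.1.1 - q.1.1.1.1.2).toNat), (q.1.1.1.2, q.1.2)), by
    have h₁ : (q.1.1.1.2 : ℤ) ≤ -q.1.1.1.1.1 := q.1.1.2
    have h₂ : (q.1.2 : ℤ) ≤ -(q.1.1.1.1.2 - q.1.1.1.1.1) := q.2
    dsimp only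
    omega⟩
  left_inv := by
    rintro ⟨⟨⟨i, j⟩, a, b⟩, _⟩
    ext <;> simp
  right_inv := by
    rintro ⟨⟨⟨⟨⟨x₁, x₂⟩, a⟩, ha⟩, b⟩, hb⟩
    simp only [perverseDegree] at ha hb
    ext <;> simp <;> omega

theorem lefschetzPiece_primitiveIndexEquiv (hcomm : Commute η β)
    (hβ : ∀ i j : ℤ, (Vg (i, j)).map β ≤ Vg (i, j + 2))
    (hRHL : ∀ (i : ℕ) (j : ℤ), ∀ v ∈ Vg (-(i : ℤ), j), (η ^ i) v = 0 → v = 0)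
    (t : {x : (ℕ × ℕ) × ℕ × ℕ // x.2.1 ≤ x.1.1 ∧ x.2.2 ≤ x.1.2}) :
    lefschetzPiece (lefschetzPiece Vg Prod.fst η) perverseDegree β (primitiveIndexEquiv t) =
      (Vg (-(t.1.1.1 : ℤ), -(t.1.1.1 : ℤ) - t.1.1.2) ⊓ LinearMap.ker (η ^ (t.1.1.1 + 1)) ⊓
        LinearMap.ker (β ^ (t.1.1.2 + 1))).map (η ^ t.1.2.1 * β ^ t.1.2.2) := by
  obtain ⟨⟨⟨i, j⟩, a, b⟩, ha, hb⟩ := t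
  show lefschetzPiece (lefschetzPiece Vg Prod.fst η) perverseDegree β
    ⟨(⟨((-(i : ℤ), -(i : ℤ) - j), a), _⟩, b), _⟩ = _
  simp only [lefschetzPiece, primitivePart, perverseDegree]
  have hi : (- -(i : ℤ)).toNat = i := by omega
  have hj : (-(-(i : ℤ) - j - -(i : ℤ))).toNat = j := by omega
  rw [hi, hj, Module.End.mul_eq_comp, Submodule.map_comp,
    ← Submodule.map_map_of_commute (hcomm.pow_pow a b),
    Submodule.map_inf_ker_of_commute (hcomm.pow_pow a (j + 1))]
  exact fun u hu => beta_pow_apply_eq_zero_of_eta_pow hβ hRHL ha hu.1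

end PerverseGrading

end General

/-- **(η,β)-Primitive Decomposition** (linear-algebra form of Corollary 3.8).

Let `V` be a finite-dimensional real vector space with a bigrading
`V = ⊕ V_i^j`, and let `η, β` be commuting endomorphisms of bidegrees
`(2,2)` and `(0,2)` respectively, satisfying relative hard Lefschetz
(`η^i : V_{-i}^j ≃ V_i^{j+2i}`) and hard Lefschetz for perverse cohomology
(`β^j : V_i^{i-j} ≃ V_i^{i+j}`).  With the primitive subspaces
`P_{-i}^{-j} = {v ∈ V_{-i}^{-i-j} | η^{i+1} v = 0, β^{j+1} v = 0}`,
for all `0 ≤ a ≤ i` and `0 ≤ b ≤ j` the map `η^a ∘ β^b` is injective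
on `P_{-i}^{-j}`, and `V` is the internal direct sum of the subspaces
`η^a(β^b(P_{-i}^{-j}))`. -/
theorem primitive_decomposition_eta_beta
    (V : Type*) [AddCommGroup V] [Module ℝ V] [FiniteDimensional ℝ V]
    (Vg : ℤ × ℤ → Submodule ℝ V)
    (hgrading : DirectSum.IsInternal Vg)
    (η β : Module.End ℝ V)
    (hcomm : Commute η β)
    (hη : ∀ i j : ℤ, (Vg (i, j)).map η ≤ Vg (i + 2, j + 2))
    (hβ : ∀ i j : ℤ, (Vg (i, j)).map β ≤ Vg (i, j + 2))
    (hRHL : ∀ (i : ℕ) (j : ℤ),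
      (Vg (-(i : ℤ), j)).map (η ^ i) = Vg ((i : ℤ), j + 2 * i) ∧
      ∀ v ∈ Vg (-(i : ℤ), j), (η ^ i) v = 0 → v = 0)
    (hHLP : ∀ (i : ℤ) (j : ℕ),
      (Vg (i, i - j)).map (β ^ j) = Vg (i, i + j) ∧
      ∀ v ∈ Vg (i, i - j), (β ^ j) v = 0 → v = 0)
    (P : ℕ → ℕ → Submodule ℝ V)
    (hP : ∀ i j : ℕ, P i j =
      Vg (-(i : ℤ), -(i : ℤ) - j) ⊓ LinearMap.ker (η ^ (i + 1)) ⊓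
        LinearMap.ker (β ^ (j + 1))) :
    (∀ i j a b : ℕ, a ≤ i → b ≤ j →
      ∀ v ∈ P i j, (η ^ a) ((β ^ b) v) = 0 → v = 0) ∧
    DirectSum.IsInternal
      (fun q : {x : (ℕ × ℕ) × ℕ × ℕ // x.2.1 ≤ x.1.1 ∧ x.2.2 ≤ x.1.2} =>
        (P q.1.1.1 q.1.1.2).map (η ^ q.1.2.1 * β ^ q.1.2.2)) := by
  have hRHL_inj : ∀ (i : ℕ) (j : ℤ), ∀ v ∈ Vg (-(i : ℤ), j), (η ^ i) v = 0 → v = 0 :=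
    fun i j => (hRHL i j).2
  refine ⟨fun i j a b ha hb v hv hv0 => ?_, ?_⟩
  · rw [hP] at hv
    have hvg : v ∈ Vg (-(i : ℤ), -(i : ℤ) - j) := hv.1.1
    exact eq_zero_of_pow_apply_eq_zero_of_le ((hHLP _ j).2) hb hvg
      (beta_pow_apply_eq_zero_of_eta_pow hβ hRHL_inj ha hvg hv0)
  · have hηL := isLefschetzOperator_eta hη hRHL
    have hβL := isLefschetzOperator_beta hcomm hη hβ hRHL_inj hHLP
    convert (hβL.isInternal_lefschetzPiece (hηL.isInternal_lefschetzPiece hgrading)).comp_equiv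
      primitiveIndexEquiv using 1
    funext t
    rw [Function.comp_apply, lefschetzPiece_primitiveIndexEquiv hcomm hβ hRHL_inj, hP]
end

section
/- (Hard Lefschetz in degrees ≥ 2 via weak Lefschetz.) Under the stated weak Lefschetz hypotheses, assume additionally that e' := r∘g satisfies hard Lefschetz on H', i.e. e'^i : H'^{-i} → H'^i is bijective for all i ≥ 0. Then for every k ≥ 2 the map e^k : H^{-k} → H^k is bijective, where e := g∘r. (Indeed e^k factors as the composition H^{-k} →r H'^{-k+1} →e'^{k−1} H'^{k−1} →g H^k of three bijections.) -/
/-!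
`e ^ k = g ∘ e' ^ (k - 1) ∘ r`, and on `H^{-k}` the three factors are the isomorphisms
`r : H^{-k} ≅ H'^{1-k}` and `g : H'^{k-1} ≅ H^k` of weak Lefschetz (as `k ≥ 2`) and
`e' ^ (k - 1) : H'^{1-k} ≅ H'^{k-1}` of hard Lefschetz on `H'`.
-/

namespace LinearMap

variable {R M N P : Type*} [Semiring R] [AddCommMonoid M] [Module R M]
  [AddCommMonoid N] [Module R N] [AddCommMonoid P] [Module R P]

theorem comp_pow_succ (r : M →ₗ[R] N) (g : N →ₗ[R] M) (n : ℕ) :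
    (g ∘ₗ r : Module.End R M) ^ (n + 1) = g ∘ₗ ((r ∘ₗ g : Module.End R N) ^ n) ∘ₗ r := by
  induction n with
  | zero => rfl
  | succ n ih =>
    rw [Module.End.iterate_succ, ih, Module.End.iterate_succ]
    rfl

def BijOn (f : M →ₗ[R] N) (p : Submodule R M) (q : Submodule R N) : Prop :=
  p.map f = q ∧ ∀ v ∈ p, f v = 0 → v = 0

theorem BijOn.comp {f : M →ₗ[R] N} {f' : N →ₗ[R] P} {p : Submodule R M}
    {q : Submodule R N} {s : Submodule R P} (hf' : f'.BijOn q s) (hf : f.BijOn p q) :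
    (f' ∘ₗ f).BijOn p s := by
  refine ⟨by rw [Submodule.map_comp, hf.1, hf'.1], fun v hv hv0 => hf.2 v hv ?_⟩
  exact hf'.2 (f v) (hf.1 ▸ Submodule.mem_map_of_mem hv) hv0

end LinearMap

theorem hard_lefschetz_high_degrees_via_weak_lefschetz_general
    (H H' : Type*) [AddCommGroup H] [Module ℝ H]
    [AddCommGroup H'] [Module ℝ H']
    (Hg : ℤ → Submodule ℝ H) (Hg' : ℤ → Submodule ℝ H')
    (r : H →ₗ[ℝ] H') (g : H' →ₗ[ℝ] H)
    (hWLr : ∀ j : ℤ, j < -1 →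
      (Hg j).map r = Hg' (j + 1) ∧ ∀ v ∈ Hg j, r v = 0 → v = 0)
    (hWLg : ∀ j : ℤ, 1 < j →
      (Hg' (j - 1)).map g = Hg j ∧ ∀ v ∈ Hg' (j - 1), g v = 0 → v = 0)
    (hHL' : ∀ i : ℕ,
      (Hg' (-(i : ℤ))).map ((r ∘ₗ g : Module.End ℝ H') ^ i) = Hg' (i : ℤ) ∧
      ∀ v ∈ Hg' (-(i : ℤ)), ((r ∘ₗ g : Module.End ℝ H') ^ i) v = 0 → v = 0) :
    ∀ k : ℕ, 2 ≤ k →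
      (Hg (-(k : ℤ))).map ((g ∘ₗ r : Module.End ℝ H) ^ k) = Hg (k : ℤ) ∧
      ∀ v ∈ Hg (-(k : ℤ)), ((g ∘ₗ r : Module.End ℝ H) ^ k) v = 0 → v = 0 := by
  intro k hk
  obtain ⟨i, rfl⟩ : ∃ i, k = i + 1 := ⟨k - 1, by omega⟩
  have hr_bij : r.BijOn (Hg (-(i + 1 : ℕ))) (Hg' (-(i : ℕ))) := by
    have h := hWLr (-(i + 1 : ℕ)) (by omega)
    rwa [show -((i + 1 : ℕ) : ℤ) + 1 = -(i : ℤ) by omega] at h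
  have hg_bij : g.BijOn (Hg' i) (Hg (i + 1 : ℕ)) := by
    have h := hWLg (i + 1 : ℕ) (by omega)
    rwa [show ((i + 1 : ℕ) : ℤ) - 1 = i by omega] at h
  have he'_bij : ((r ∘ₗ g : Module.End ℝ H') ^ i).BijOn (Hg' (-(i : ℕ))) (Hg' i) := hHL' i
  rw [LinearMap.comp_pow_succ]
  exact hg_bij.comp (he'_bij.comp hr_bij)

/-- **Hard Lefschetz in degrees ≥ 2 via weak Lefschetz.**

Let `H`, `H'` be finite-dimensional ℤ-graded real vector spaces, `r : H → H'`
and `g : H' → H` linear maps of degree `1` satisfying the weak Lefschetz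
conditions, and set `e = g ∘ r`, `e' = r ∘ g`.  If `e'` satisfies hard
Lefschetz on `H'`, then for every `k ≥ 2` the map `e^k : H^{-k} → H^k`
is bijective. -/
theorem hard_lefschetz_high_degrees_via_weak_lefschetz
    (H H' : Type*) [AddCommGroup H] [Module ℝ H] [FiniteDimensional ℝ H]
    [AddCommGroup H'] [Module ℝ H'] [FiniteDimensional ℝ H']
    (Hg : ℤ → Submodule ℝ H) (Hg' : ℤ → Submodule ℝ H')
    (hgrading : DirectSum.IsInternal Hg) (hgrading' : DirectSum.IsInternal Hg')
    (r : H →ₗ[ℝ] H') (g : H' →ₗ[ℝ] H)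
    (hr : ∀ j : ℤ, (Hg j).map r ≤ Hg' (j + 1))
    (hg : ∀ j : ℤ, (Hg' j).map g ≤ Hg (j + 1))
    (hWLr : ∀ j : ℤ, j < -1 →
      (Hg j).map r = Hg' (j + 1) ∧ ∀ v ∈ Hg j, r v = 0 → v = 0)
    (hWLr' : ∀ v ∈ Hg (-1), r v = 0 → v = 0)
    (hWLg : ∀ j : ℤ, 1 < j →
      (Hg' (j - 1)).map g = Hg j ∧ ∀ v ∈ Hg' (j - 1), g v = 0 → v = 0)
    (hWLg' : (Hg' 0).map g = Hg 1)
    (hHL' : ∀ i : ℕ,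
      (Hg' (-(i : ℤ))).map ((r ∘ₗ g : Module.End ℝ H') ^ i) = Hg' (i : ℤ) ∧
      ∀ v ∈ Hg' (-(i : ℤ)), ((r ∘ₗ g : Module.End ℝ H') ^ i) v = 0 → v = 0) :
    ∀ k : ℕ, 2 ≤ k →
      (Hg (-(k : ℤ))).map ((g ∘ₗ r : Module.End ℝ H) ^ k) = Hg (k : ℤ) ∧
      ∀ v ∈ Hg (-(k : ℤ)), ((g ∘ₗ r : Module.End ℝ H) ^ k) v = 0 → v = 0 :=
  hard_lefschetz_high_degrees_via_weak_lefschetz_general H H' Hg Hg' r g hWLr hWLg hHL'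
end

section
/- (Middle hard Lefschetz from anisotropy on restricted primitives.) Under the stated weak Lefschetz hypotheses, suppose given a bilinear form B : H^{-1} × H^1 → ℝ and a bilinear form B' : H'^0 × H'^0 → ℝ such that B'(r(α), r(β)) = B(α, e(β)) for all α, β ∈ H^{-1}, and such that B'(γ, γ) ≠ 0 for every nonzero γ ∈ r(P^{-1}), where P^{-1} := {α ∈ H^{-1} | e²(α) = 0}. Then e : H^{-1} → H^1 is injective; if moreover dim H^{-1} = dim H^1, then e : H^{-1} → H^1 is bijective. -/
/-!
If `e v = 0` for some `v ∈ H^{-1}`, then `v` is primitive (`e² v = 0`) and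
`B'(r v, r v) = B(v, e v) = 0`, so anisotropy forces `r v = 0`, and weak Lefschetz
(`r` injective on `H^{-1}`) gives `v = 0`. Since `e` maps `H^{-1}` into `H^1`,
equality of dimensions turns injectivity into bijectivity.
-/

open Module

namespace Submodule

variable {K V W : Type*} [DivisionRing K] [AddCommGroup V] [Module K V]
  [AddCommGroup W] [Module K W]

theorem finrank_map_of_disjoint_ker {p : Submodule K V} {f : V →ₗ[K] W}
    (hf : Disjoint p (LinearMap.ker f)) : finrank K (p.map f) = finrank K p := by
  rw [← LinearMap.range_domRestrict]
  exact LinearMap.finrank_range_of_inj (LinearMap.injective_domRestrict_iff.mpr hf)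

theorem map_eq_of_disjoint_ker_of_finrank_eq {p : Submodule K V} {q : Submodule K W}
    [FiniteDimensional K q] {f : V →ₗ[K] W} (hf : Disjoint p (LinearMap.ker f))
    (hle : p.map f ≤ q) (hdim : finrank K p = finrank K q) : p.map f = q :=
  eq_of_le_of_finrank_eq hle (by rw [finrank_map_of_disjoint_ker hf, hdim])

end Submodule

theorem disjoint_ker_of_anisotropic {R M N M' : Type*} [CommSemiring R]
    [AddCommMonoid M] [Module R M] [AddCommMonoid N] [Module R N]
    [AddCommMonoid M'] [Module R M'] {p q : Submodule R M} (r : M →ₗ[R] N) (e : M →ₗ[R] M')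
    (B : M →ₗ[R] M' →ₗ[R] R) (B' : N →ₗ[R] N →ₗ[R] R) (hq : p ⊓ LinearMap.ker e ≤ q)
    (hr : Disjoint p (LinearMap.ker r)) (hBB' : ∀ v ∈ p, B' (r v) (r v) = B v (e v))
    (haniso : ∀ γ ∈ q.map r, γ ≠ 0 → B' γ γ ≠ 0) : Disjoint p (LinearMap.ker e) := by
  refine LinearMap.disjoint_ker.mpr fun v hv hev ↦ ?_
  have hrv : r v ∈ q.map r := Submodule.mem_map_of_mem (hq ⟨hv, hev⟩)
  have hB : B' (r v) (r v) = 0 := by rw [hBB' v hv, hev, map_zero]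
  exact LinearMap.disjoint_ker.mp hr v hv (not_ne_iff.mp fun hne ↦ haniso _ hrv hne hB)

theorem middle_hard_lefschetz_of_anisotropy_general
    (H H' : Type*) [AddCommGroup H] [Module ℝ H] [FiniteDimensional ℝ H]
    [AddCommGroup H'] [Module ℝ H']
    (Hg : ℤ → Submodule ℝ H) (Hg' : ℤ → Submodule ℝ H')
    (r : H →ₗ[ℝ] H') (g : H' →ₗ[ℝ] H)
    (hr : ∀ j : ℤ, (Hg j).map r ≤ Hg' (j + 1))
    (hg : ∀ j : ℤ, (Hg' j).map g ≤ Hg (j + 1))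
    (hWLr' : ∀ v ∈ Hg (-1), r v = 0 → v = 0)
    (B : H →ₗ[ℝ] H →ₗ[ℝ] ℝ) (B' : H' →ₗ[ℝ] H' →ₗ[ℝ] ℝ)
    (hBB' : ∀ α ∈ Hg (-1), ∀ β ∈ Hg (-1), B' (r α) (r β) = B α ((g ∘ₗ r) β))
    (haniso : ∀ γ ∈ (Hg (-1) ⊓ LinearMap.ker ((g ∘ₗ r : Module.End ℝ H) ^ 2)).map r,
      γ ≠ 0 → B' γ γ ≠ 0) :
    (∀ v ∈ Hg (-1), (g ∘ₗ r) v = 0 → v = 0) ∧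
    (finrank ℝ (Hg (-1)) = finrank ℝ (Hg 1) →
      (Hg (-1)).map (g ∘ₗ r) = Hg 1) := by
  have hprim : Hg (-1) ⊓ LinearMap.ker (g ∘ₗ r) ≤
      Hg (-1) ⊓ LinearMap.ker ((g ∘ₗ r : Module.End ℝ H) ^ 2) :=
    inf_le_inf_left _ (LinearMap.ker_le_ker_comp _ _)
  have hinj : Disjoint (Hg (-1)) (LinearMap.ker (g ∘ₗ r)) :=
    disjoint_ker_of_anisotropic r (g ∘ₗ r) B B' hprim (LinearMap.disjoint_ker.mpr hWLr')
      (fun v hv ↦ hBB' v hv v hv) haniso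
  have hdeg : (Hg (-1)).map (g ∘ₗ r) ≤ Hg 1 := by
    rw [Submodule.map_comp]
    exact (Submodule.map_mono (hr (-1))).trans (hg 0)
  exact ⟨LinearMap.disjoint_ker.mp hinj,
    Submodule.map_eq_of_disjoint_ker_of_finrank_eq hinj hdeg⟩

/-- **Middle hard Lefschetz from anisotropy on restricted primitives.**

Under the weak Lefschetz hypotheses for degree-`1` maps `r : H → H'` and
`g : H' → H`, with `e = g ∘ r`, suppose given bilinear forms `B` (pairing
`H^{-1}` with `H^1`) and `B'` (on `H'^0`) with `B'(rα, rβ) = B(α, eβ)` for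
all `α, β ∈ H^{-1}`, such that `B'` is anisotropic on `r(P^{-1})`, where
`P^{-1} = {α ∈ H^{-1} | e² α = 0}`.  Then `e : H^{-1} → H^1` is injective;
and if moreover `dim H^{-1} = dim H^1` then `e : H^{-1} → H^1` is bijective. -/
theorem middle_hard_lefschetz_of_anisotropy
    (H H' : Type*) [AddCommGroup H] [Module ℝ H] [FiniteDimensional ℝ H]
    [AddCommGroup H'] [Module ℝ H'] [FiniteDimensional ℝ H']
    (Hg : ℤ → Submodule ℝ H) (Hg' : ℤ → Submodule ℝ H')
    (hgrading : DirectSum.IsInternal Hg) (hgrading' : DirectSum.IsInternal Hg')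
    (r : H →ₗ[ℝ] H') (g : H' →ₗ[ℝ] H)
    (hr : ∀ j : ℤ, (Hg j).map r ≤ Hg' (j + 1))
    (hg : ∀ j : ℤ, (Hg' j).map g ≤ Hg (j + 1))
    (hWLr : ∀ j : ℤ, j < -1 →
      (Hg j).map r = Hg' (j + 1) ∧ ∀ v ∈ Hg j, r v = 0 → v = 0)
    (hWLr' : ∀ v ∈ Hg (-1), r v = 0 → v = 0)
    (hWLg : ∀ j : ℤ, 1 < j →
      (Hg' (j - 1)).map g = Hg j ∧ ∀ v ∈ Hg' (j - 1), g v = 0 → v = 0)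
    (hWLg' : (Hg' 0).map g = Hg 1)
    (B : H →ₗ[ℝ] H →ₗ[ℝ] ℝ) (B' : H' →ₗ[ℝ] H' →ₗ[ℝ] ℝ)
    (hBB' : ∀ α ∈ Hg (-1), ∀ β ∈ Hg (-1), B' (r α) (r β) = B α ((g ∘ₗ r) β))
    (haniso : ∀ γ ∈ (Hg (-1) ⊓ LinearMap.ker ((g ∘ₗ r : Module.End ℝ H) ^ 2)).map r,
      γ ≠ 0 → B' γ γ ≠ 0) :
    (∀ v ∈ Hg (-1), (g ∘ₗ r) v = 0 → v = 0) ∧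
    (finrank ℝ (Hg (-1)) = finrank ℝ (Hg 1) →
      (Hg (-1)).map (g ∘ₗ r) = Hg 1) :=
  middle_hard_lefschetz_of_anisotropy_general H H' Hg Hg' r g hr hg hWLr' B B' hBB' haniso
end

section
/- (Rank of the composition pairing computes the multiplicity of a simple summand.) Let k, C, S and the composition pairing be as in the context. Let X be an object of C admitting a direct sum decomposition X ≅ S^{⊕d} ⊕ F for some integer d ≥ 0 and some object F which has no direct summand isomorphic to S. Then the composition pairing Hom(S,X) × Hom(X,S) → End(S) ≅ k has rank exactly d. -/
open CategoryTheory CategoryTheory.Limits Module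

attribute [local instance] CategoryTheory.Abelian.hasFiniteBiproducts

/-! The copies of `S` in `X ≅ S^{⊕d} ⊞ F` give maps `φᵢ : S ⟶ X`, `ψᵢ : X ⟶ S` with
`φᵢ ≫ ψⱼ = δᵢⱼ` and `𝟙 X = ∑ ψᵢ ≫ φᵢ + (projection through F)`. Since `End S = k`, a
composite `S ⟶ F ⟶ S` is either zero or invertible, and in the latter case `S` splits off
`F`; so it vanishes, and every composite `f ≫ g : S ⟶ X ⟶ S` equals
`∑ c(f ≫ ψᵢ) • φᵢ ≫ g`. Hence the functionals `c(φᵢ ≫ -)` span the range of the pairing, and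
they are linearly independent because they are dual to the `ψⱼ`. -/

section LinearAlgebra

variable {k V W : Type*} [Field k] [AddCommGroup V] [Module k V] [AddCommGroup W] [Module k W]

theorem finrank_range_eq_card_of_biorthogonal {ι : Type*} [Fintype ι] [DecidableEq ι]
    (T : V →ₗ[k] W →ₗ[k] k) (v : ι → V) (w : ι → W)
    (hvw : ∀ i j, T (v i) (w j) = if i = j then 1 else 0)
    (hT : ∀ x, T x = ∑ i, T x (w i) • T (v i)) :
    finrank k (LinearMap.range T) = Fintype.card ι := by
  have hli : LinearIndependent k (T ∘ v) := by
    refine Fintype.linearIndependent_iff.mpr fun a ha j => ?_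
    simpa [hvw] using LinearMap.congr_fun ha (w j)
  have hrange : LinearMap.range T = Submodule.span k (Set.range (T ∘ v)) := by
    refine le_antisymm ?_ (Submodule.span_le.mpr ?_)
    · rintro _ ⟨x, rfl⟩
      rw [hT x]
      exact Submodule.sum_mem _ fun i _ =>
        Submodule.smul_mem _ _ (Submodule.subset_span ⟨i, rfl⟩)
    · rintro _ ⟨i, rfl⟩
      exact ⟨v i, rfl⟩
  rw [hrange, finrank_span_eq_card hli]

end LinearAlgebra

section Decomposition

variable {C : Type*} [Category C] [Abelian C] {S F X : C} {d : ℕ}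

theorem nonempty_iso_biprod_of_comp_eq_id {α : S ⟶ F} {β : F ⟶ S} (h : α ≫ β = 𝟙 S) :
    Nonempty (F ≅ S ⊞ cokernel α) :=
  haveI : IsSplitMono α := IsSplitMono.mk' ⟨β, h⟩
  ⟨biprod.uniqueUpToIso _ _
    (isBilimitBinaryBiconeOfIsSplitMonoOfCokernel (cokernelIsCokernel α))⟩

theorem comp_eq_zero_of_isEmpty_iso_biprod {k : Type*} [Field k] [Linear k C]
    (hEnd : ∀ f : S ⟶ S, ∃ a : k, f = a • 𝟙 S) (hF : ∀ G : C, IsEmpty (F ≅ S ⊞ G))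
    (α : S ⟶ F) (β : F ⟶ S) : α ≫ β = 0 := by
  obtain ⟨a, ha⟩ := hEnd (α ≫ β)
  obtain rfl | ha0 := eq_or_ne a 0
  · rwa [zero_smul] at ha
  · have hid : α ≫ (a⁻¹ • β) = 𝟙 S := by
      rw [Linear.comp_smul, ha, smul_smul, inv_mul_cancel₀ ha0, one_smul]
    exact ((hF _).false (nonempty_iso_biprod_of_comp_eq_id hid).some).elim

variable (e : X ≅ (⨁ fun _ : Fin d => S) ⊞ F)

noncomputable def copyι (i : Fin d) : S ⟶ X :=
  biproduct.ι (fun _ : Fin d => S) i ≫ biprod.inl ≫ e.inv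

noncomputable def copyπ (i : Fin d) : X ⟶ S :=
  e.hom ≫ biprod.fst ≫ biproduct.π (fun _ : Fin d => S) i

theorem copyι_comp_copyπ (i j : Fin d) :
    copyι e i ≫ copyπ e j = if i = j then 𝟙 S else 0 := by
  simp [copyι, copyπ, biproduct.ι_π]

theorem sum_copyπ_comp_copyι_add :
    ∑ i, copyπ e i ≫ copyι e i + e.hom ≫ biprod.snd ≫ biprod.inr ≫ e.inv = 𝟙 X := by
  calc
    _ = e.hom ≫ (biprod.fst ≫ (∑ i, biproduct.π _ i ≫ biproduct.ι _ i) ≫ biprod.inl +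
          biprod.snd ≫ biprod.inr) ≫ e.inv := by
      simp only [copyι, copyπ, Preadditive.sum_comp, Preadditive.comp_sum,
        Preadditive.add_comp, Preadditive.comp_add, Category.assoc]
    _ = 𝟙 X := by
      rw [biproduct.total, Category.id_comp, biprod.total, Category.id_comp, Iso.hom_inv_id]

theorem comp_eq_sum_comp_copyπ_comp (hF : ∀ (α : S ⟶ F) (β : F ⟶ S), α ≫ β = 0)
    (f : S ⟶ X) (g : X ⟶ S) : f ≫ g = ∑ i, (f ≫ copyπ e i) ≫ copyι e i ≫ g := by
  conv_lhs => rw [← Category.id_comp g, ← sum_copyπ_comp_copyι_add e]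
  have hrest : f ≫ e.hom ≫ biprod.snd ≫ biprod.inr ≫ e.inv ≫ g = 0 := by
    simpa only [Category.assoc] using hF (f ≫ e.hom ≫ biprod.snd) (biprod.inr ≫ e.inv ≫ g)
  simp only [Preadditive.add_comp, Preadditive.comp_add, hrest, add_zero,
    Preadditive.sum_comp, Preadditive.comp_sum, Category.assoc]

end Decomposition

/-- **Rank of the composition pairing computes the multiplicity of a simple
summand.**

Let `C` be a `k`-linear abelian category with finite-dimensional Hom-spaces,
`S` a simple object with `End(S) = k·𝟙`, and `c : End(S) → k` the linear
functional with `c(𝟙) = 1`.  Let `p` be the composition pairing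
`Hom(S,X) × Hom(X,S) → End(S)`, `(φ, ψ) ↦ φ ≫ ψ`.  If `X ≅ S^{⊕d} ⊕ F`
where `F` has no direct summand isomorphic to `S`, then the rank of the
pairing — that is, the rank of the induced map
`Hom(S,X) → Hom_k(Hom(X,S), k)` — is exactly `d`. -/
theorem rank_composition_pairing_eq_multiplicity
    (k : Type*) [Field k]
    (C : Type*) [Category C] [Abelian C] [Linear k C]
    [∀ X Y : C, FiniteDimensional k (X ⟶ Y)]
    (S : C) [Simple S]
    (hEnd : ∀ f : S ⟶ S, ∃ a : k, f = a • 𝟙 S)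
    (c : (S ⟶ S) →ₗ[k] k) (hc : c (𝟙 S) = 1)
    (X : C)
    (p : (S ⟶ X) →ₗ[k] (X ⟶ S) →ₗ[k] (S ⟶ S))
    (hp : ∀ (φ : S ⟶ X) (ψ : X ⟶ S), p φ ψ = φ ≫ ψ)
    (d : ℕ) (F : C)
    (hF : ∀ G : C, IsEmpty (F ≅ S ⊞ G))
    (hX : Nonempty (X ≅ (⨁ fun _ : Fin d => S) ⊞ F)) :
    finrank k
      (LinearMap.range ((LinearMap.llcomp k (X ⟶ S) (S ⟶ S) k c).comp p)) = d := by
  obtain ⟨e⟩ := hX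
  have hscalar : ∀ f : S ⟶ S, f = c f • 𝟙 S := fun f => by
    obtain ⟨a, rfl⟩ := hEnd f
    rw [map_smul, hc, smul_eq_mul, mul_one]
  rw [← Fintype.card_fin d]
  refine finrank_range_eq_card_of_biorthogonal _ (copyι e) (copyπ e) (fun i j => ?_) fun f => ?_
  · simp [hp, copyι_comp_copyπ, apply_ite c, hc]
  · ext g
    simp only [LinearMap.comp_apply, LinearMap.llcomp_apply, hp, LinearMap.coe_sum,
      Finset.sum_apply, LinearMap.smul_apply, smul_eq_mul]
    rw [comp_eq_sum_comp_copyπ_comp e (comp_eq_zero_of_isEmpty_iso_biprod hEnd hF), map_sum]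
    refine Finset.sum_congr rfl fun i _ => ?_
    rw [hscalar (f ≫ copyπ e i), Linear.smul_comp, Category.id_comp, map_smul, smul_eq_mul,
      ← hscalar]
end

section
/- (Nondegenerate composition pairing yields a splitting.) Let k, C, S and the composition pairing be as in the context, and let X be an object of C. Suppose the composition pairing Hom(S,X) × Hom(X,S) → End(S) ≅ k is nondegenerate, i.e. the induced linear maps Hom(S,X) → Hom_k(Hom(X,S), k) and Hom(X,S) → Hom_k(Hom(S,X), k) are injective. Then, with d := dim_k Hom(S,X) = dim_k Hom(X,S), there is a direct sum decomposition X ≅ S^{⊕d} ⊕ F for some object F with Hom(S,F) = 0 and Hom(F,S) = 0. -/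
/-!
Nondegeneracy makes the pairing `(φ, ψ) ↦ c (φ ≫ ψ)` perfect, so `Hom(S,X)` and `Hom(X,S)` have
the same dimension `d` and a basis `ψⱼ` of `Hom(X,S)` has a dual basis `φᵢ` of `Hom(S,X)`; as
`End S = k`, duality means `φᵢ ≫ ψⱼ = δᵢⱼ 𝟙`. Hence `(φᵢ) : S^d ⟶ X` is a split mono with
retraction `(ψⱼ)`, and `X ≅ S^d ⊞ F` with `F` its cokernel. A map `S ⟶ F` composed with the
section is a map `S ⟶ X` killed by every `ψⱼ`, and a map `F ⟶ S` composed with the projection is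
a map `X ⟶ S` killed by every `φᵢ`; by nondegeneracy both vanish.
-/

open CategoryTheory CategoryTheory.Limits Module

attribute [local instance] CategoryTheory.Abelian.hasFiniteBiproducts

theorem LinearMap.IsPerfPair.exists_basis_apply_eq_ite {R M N ι : Type*} [CommRing R]
    [AddCommGroup M] [Module R M] [AddCommGroup N] [Module R N] [DecidableEq ι] [Finite ι]
    (p : M →ₗ[R] N →ₗ[R] R) [p.IsPerfPair] (b : Basis ι R N) :
    ∃ b' : Basis ι R M, ∀ i j, p (b' i) (b j) = if j = i then 1 else 0 :=
  ⟨b.dualBasis.map p.toPerfPair.symm, fun i j => by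
    rw [Basis.map_apply, ← p.toPerfPair_apply, LinearEquiv.apply_symm_apply,
      b.dualBasis_apply_self]⟩

namespace CategoryTheory

variable {C : Type*} [Category C] {S X : C}

section Preadditive

variable [Preadditive C]

theorem Limits.biproduct.desc_comp_lift_eq_id [HasFiniteBiproducts C] {ι : Type*} [Finite ι]
    [DecidableEq ι] {φ : ι → (S ⟶ X)} {ψ : ι → (X ⟶ S)}
    (hφψ : ∀ i j, φ i ≫ ψ j = if j = i then 𝟙 S else 0) :
    biproduct.desc φ ≫ biproduct.lift ψ = 𝟙 (⨁ fun _ : ι => S) := by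
  refine biproduct.hom_ext _ _ fun j => biproduct.hom_ext' _ _ fun i => ?_
  simp [hφψ, biproduct.ι_π, eq_comm]

theorem ShortComplex.Splitting.eq_zero_of_forall_comp_r {T : ShortComplex C} (σ : T.Splitting)
    (h : ∀ f : S ⟶ T.X₂, f ≫ σ.r = 0 → f = 0) (f : S ⟶ T.X₃) : f = 0 := by
  have hfs : f ≫ σ.s = 0 := h _ (by rw [Category.assoc, σ.s_r, comp_zero])
  rw [← Category.comp_id f, ← σ.s_g, ← Category.assoc, hfs, zero_comp]

theorem ShortComplex.Splitting.eq_zero_of_forall_f_comp {T : ShortComplex C} (σ : T.Splitting)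
    (h : ∀ g : T.X₂ ⟶ S, T.f ≫ g = 0 → g = 0) (g : T.X₃ ⟶ S) : g = 0 := by
  have hg : T.g ≫ g = 0 := h _ (by rw [← Category.assoc, T.zero, zero_comp])
  rw [← Category.id_comp g, ← σ.s_g, Category.assoc, hg, comp_zero]

end Preadditive

theorem exists_iso_biproduct_biprod_of_dual_families [Abelian C] {ι : Type*} [Finite ι]
    [DecidableEq ι]
    (φ : ι → (S ⟶ X)) (ψ : ι → (X ⟶ S))
    (hφψ : ∀ i j, φ i ≫ ψ j = if j = i then 𝟙 S else 0)
    (hψ : ∀ f : S ⟶ X, (∀ j, f ≫ ψ j = 0) → f = 0)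
    (hφ : ∀ g : X ⟶ S, (∀ i, φ i ≫ g = 0) → g = 0) :
    ∃ F : C, Nonempty (X ≅ (⨁ fun _ : ι => S) ⊞ F) ∧
      (∀ f : S ⟶ F, f = 0) ∧ (∀ g : F ⟶ S, g = 0) := by
  let σ := ShortComplex.Splitting.ofExactOfRetraction _
    (ShortComplex.cokernelSequence_exact (biproduct.desc φ)) (biproduct.lift ψ)
    (biproduct.desc_comp_lift_eq_id hφψ) inferInstance
  refine ⟨cokernel (biproduct.desc φ), ⟨σ.isoBinaryBiproduct⟩,
    σ.eq_zero_of_forall_comp_r fun (f : S ⟶ X) (hf : f ≫ biproduct.lift ψ = 0) =>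
      hψ f fun j => by simpa using hf =≫ biproduct.π _ j,
    σ.eq_zero_of_forall_f_comp fun (g : X ⟶ S) (hg : biproduct.desc φ ≫ g = 0) =>
      hφ g fun i => by simpa using biproduct.ι _ i ≫= hg⟩

end CategoryTheory

/-- **Nondegenerate composition pairing yields a splitting.**

Let `C` be a `k`-linear abelian category with finite-dimensional Hom-spaces,
`S` a simple object with `End(S) = k·𝟙`, and `c : End(S) → k` the linear
functional with `c(𝟙) = 1`.  Let `p` be the composition pairing
`Hom(S,X) × Hom(X,S) → End(S)`, `(φ, ψ) ↦ φ ≫ ψ`.  If the pairing is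
nondegenerate, i.e. both induced maps `Hom(S,X) → Hom_k(Hom(X,S), k)` and
`Hom(X,S) → Hom_k(Hom(S,X), k)` are injective, then with
`d = dim Hom(S,X) = dim Hom(X,S)` there is a decomposition `X ≅ S^{⊕d} ⊕ F`
with `Hom(S,F) = 0` and `Hom(F,S) = 0`. -/
theorem splitting_of_nondegenerate_composition_pairing
    (k : Type*) [Field k]
    (C : Type*) [Category C] [Abelian C] [Linear k C]
    [∀ X Y : C, FiniteDimensional k (X ⟶ Y)]
    (S : C) [Simple S]
    (hEnd : ∀ f : S ⟶ S, ∃ a : k, f = a • 𝟙 S)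
    (c : (S ⟶ S) →ₗ[k] k) (hc : c (𝟙 S) = 1)
    (X : C)
    (p : (S ⟶ X) →ₗ[k] (X ⟶ S) →ₗ[k] (S ⟶ S))
    (hp : ∀ (φ : S ⟶ X) (ψ : X ⟶ S), p φ ψ = φ ≫ ψ)
    (hinj₁ : Function.Injective ((LinearMap.llcomp k (X ⟶ S) (S ⟶ S) k c).comp p))
    (hinj₂ : Function.Injective
      ((LinearMap.llcomp k (S ⟶ X) (S ⟶ S) k c).comp p.flip)) :
    finrank k (S ⟶ X) = finrank k (X ⟶ S) ∧
    ∃ F : C,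
      Nonempty (X ≅ (⨁ fun _ : Fin (finrank k (S ⟶ X)) => S) ⊞ F) ∧
      (∀ φ : S ⟶ F, φ = 0) ∧ (∀ ψ : F ⟶ S, ψ = 0) := by
  let q := (LinearMap.llcomp k (X ⟶ S) (S ⟶ S) k c).comp p
  have hq : ∀ φ ψ, q φ ψ = c (φ ≫ ψ) := fun φ ψ => by simp [q, hp]
  have : q.IsPerfPair := .of_injective hinj₁ hinj₂
  have hrank : finrank k (S ⟶ X) = finrank k (X ⟶ S) := finrank_of_isPerfPair q
  refine ⟨hrank, ?_⟩
  let ψ := finBasisOfFinrankEq k (X ⟶ S) hrank.symm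
  obtain ⟨φ, hφψ⟩ := LinearMap.IsPerfPair.exists_basis_apply_eq_ite q ψ
  have hscalar : ∀ f : S ⟶ S, f = c f • 𝟙 S := fun f => by
    obtain ⟨a, rfl⟩ := hEnd f
    rw [map_smul, hc, smul_eq_mul, mul_one]
  refine exists_iso_biproduct_biprod_of_dual_families φ ψ (fun i j => ?_)
    (fun f hf => hinj₁ (ψ.ext fun j => ?_)) (fun g hg => hinj₂ (φ.ext fun i => ?_))
  · rw [hscalar (φ i ≫ ψ j), ← hq, hφψ]
    split_ifs <;> simp
  · simp [hp, hf]
  · simp [hp, hg]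
end
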